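/- For scalar random variables $u_1,\dots,u_k$ and $v_1,\dots,v_k$, if for some $p \geq 2$ there are finite constants $C_{pk}, D_{pk}$ such that $\mathbb{E}[|u_i|^{pk}] \leq C_{pk}$, $\mathbb{E}[|v_i|^{pk}] \leq C_{pk}$, and $\mathbb{E}[|u_i - v_i|^{pk}] \leq D_{pk}$ for all $i$, then $\mathbb{E}\left[\left|\prod_{i=1}^k u_i - \prod_{i=1}^k v_i\right|^p\right] \leq k^p \, C_{pk}^{1-1/k} D_{pk}^{1/k}$. -/
import Mathlib

open MeasureTheory Finset ENNReal

lemma abs_prod_sub_prod_le (a b : ℕ → ℝ) (n : ℕ) :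
    |∏ i ∈ Finset.range n, a i - ∏ i ∈ Finset.range n, b i| ≤
      ∑ j ∈ Finset.range n,
        (∏ i ∈ Finset.range j, |b i|) * |a j - b j| * ∏ i ∈ Finset.Ico (j+1) n, |a i| := by
  induction n with
  | zero => simp
  | succ n ih =>
    have key : ∏ i ∈ Finset.range (n+1), a i - ∏ i ∈ Finset.range (n+1), b i
        = (∏ i ∈ Finset.range n, b i) * (a n - b n)
          + (∏ i ∈ Finset.range n, a i - ∏ i ∈ Finset.range n, b i) * a n := by
      rw [prod_range_succ, prod_range_succ]; ring
    have h1 : |∏ i ∈ Finset.range (n+1), a i - ∏ i ∈ Finset.range (n+1), b i|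
        ≤ (∏ i ∈ Finset.range n, |b i|) * |a n - b n|
          + (∑ j ∈ Finset.range n,
              (∏ i ∈ Finset.range j, |b i|) * |a j - b j| * ∏ i ∈ Finset.Ico (j+1) n, |a i|)
            * |a n| := by
      rw [key]
      refine (abs_add_le _ _).trans ?_
      rw [abs_mul, abs_mul, Finset.abs_prod]
      gcongr
    refine h1.trans (le_of_eq ?_)
    rw [Finset.sum_range_succ, Finset.sum_mul]
    have h2 : (∏ i ∈ Finset.range n, |b i|) * |a n - b n| * ∏ i ∈ Finset.Ico (n+1) (n+1), |a i|
        = (∏ i ∈ Finset.range n, |b i|) * |a n - b n| := by simp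
    rw [h2, add_comm]
    congr 1
    refine Finset.sum_congr rfl fun j hj => ?_
    rw [mul_assoc, mul_assoc, ← Finset.prod_Ico_succ_top (Nat.succ_le_of_lt (mem_range.mp hj))]
    ring

lemma ennreal_sum_rpow_le {k : ℕ} (hk : k ≠ 0) {p : ℝ} (hp : 1 ≤ p) (z : ℕ → ℝ≥0∞) :
    (∑ j ∈ Finset.range k, z j) ^ p
      ≤ (k : ℝ≥0∞) ^ (p - 1) * ∑ j ∈ Finset.range k, z j ^ p := by
  have hk0 : (k : ℝ≥0∞) ≠ 0 := Nat.cast_ne_zero.mpr hk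
  have hkt : (k : ℝ≥0∞) ≠ ⊤ := natCast_ne_top k
  have hw : ∑ _j ∈ Finset.range k, (k : ℝ≥0∞)⁻¹ = 1 := by
    rw [Finset.sum_const, card_range, nsmul_eq_mul, ENNReal.mul_inv_cancel hk0 hkt]
  have h := ENNReal.rpow_arith_mean_le_arith_mean_rpow (Finset.range k)
    (fun _ => (k : ℝ≥0∞)⁻¹) z hw hp
  have hsum : ∑ j ∈ Finset.range k, (k : ℝ≥0∞)⁻¹ * z j
      = (k : ℝ≥0∞)⁻¹ * ∑ j ∈ Finset.range k, z j := by rw [Finset.mul_sum]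
  have hsum2 : ∑ j ∈ Finset.range k, (k : ℝ≥0∞)⁻¹ * z j ^ p
      = (k : ℝ≥0∞)⁻¹ * ∑ j ∈ Finset.range k, z j ^ p := by rw [Finset.mul_sum]
  rw [hsum, hsum2] at h
  have key : (∑ j ∈ Finset.range k, z j) ^ p
      = (k : ℝ≥0∞) ^ p * ((k : ℝ≥0∞)⁻¹ * ∑ j ∈ Finset.range k, z j) ^ p := by
    rw [ENNReal.mul_rpow_of_nonneg _ _ (by linarith : (0:ℝ) ≤ p),
      ← mul_assoc, ← ENNReal.mul_rpow_of_nonneg _ _ (by linarith : (0:ℝ) ≤ p),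
      ENNReal.mul_inv_cancel hk0 hkt, ENNReal.one_rpow, one_mul]
  calc (∑ j ∈ Finset.range k, z j) ^ p
      = (k : ℝ≥0∞) ^ p * ((k : ℝ≥0∞)⁻¹ * ∑ j ∈ Finset.range k, z j) ^ p := key
    _ ≤ (k : ℝ≥0∞) ^ p * ((k : ℝ≥0∞)⁻¹ * ∑ j ∈ Finset.range k, z j ^ p) := by gcongr
    _ = (k : ℝ≥0∞) ^ (p - 1) * ∑ j ∈ Finset.range k, z j ^ p := by
        rw [← mul_assoc]
        congr 1
        rw [show p = (p - 1) + 1 by ring, ENNReal.rpow_add _ _ hk0 hkt, ENNReal.rpow_one,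
          mul_assoc, ENNReal.mul_inv_cancel hk0 hkt, mul_one]
        ring_nf

/-- If scalar random variables `u i`, `v i`, `i = 1,…,k`, have `p k`-th moments bounded by
`C`, `C`, `D` respectively, then
`E[|∏ u i - ∏ v i|^p] ≤ k^p C^(1-1/k) D^(1/k)`. -/
theorem product_difference_moment_bound
    {Ω : Type*} [MeasurableSpace Ω] (μ : Measure Ω) [IsProbabilityMeasure μ]
    (k : ℕ) (hk : 1 ≤ k) (p : ℝ) (hp : 2 ≤ p)
    (u v : Fin k → Ω → ℝ)
    (hu : ∀ i, Measurable (u i)) (hv : ∀ i, Measurable (v i))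
    (hui : ∀ i, Integrable (fun ω => |u i ω| ^ (p * k)) μ)
    (hvi : ∀ i, Integrable (fun ω => |v i ω| ^ (p * k)) μ)
    (huvi : ∀ i, Integrable (fun ω => |u i ω - v i ω| ^ (p * k)) μ)
    (C D : ℝ)
    (hC : ∀ i, ∫ ω, |u i ω| ^ (p * k) ∂μ ≤ C)
    (hC' : ∀ i, ∫ ω, |v i ω| ^ (p * k) ∂μ ≤ C)
    (hD : ∀ i, ∫ ω, |u i ω - v i ω| ^ (p * k) ∂μ ≤ D) :
    ∫ ω, |(∏ i, u i ω) - (∏ i, v i ω)| ^ p ∂μ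
      ≤ (k : ℝ) ^ p * C ^ (1 - 1 / (k : ℝ)) * D ^ (1 / (k : ℝ)) := by
  classical
  have hk0 : k ≠ 0 := Nat.one_le_iff_ne_zero.mp hk
  have hK0 : (0:ℝ) < (k : ℝ) := by exact_mod_cast Nat.pos_of_ne_zero hk0
  have hp1 : (1:ℝ) ≤ p := by linarith
  have hp0 : (0:ℝ) ≤ p := by linarith
  have hpk0 : (0:ℝ) ≤ p * k := by positivity
  -- extend u, v to ℕ-indexed families
  set U : ℕ → Ω → ℝ := fun n ω => if h : n < k then u ⟨n, h⟩ ω else 0 with hUdef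
  set V : ℕ → Ω → ℝ := fun n ω => if h : n < k then v ⟨n, h⟩ ω else 0 with hVdef
  have hUeq : ∀ (i : ℕ) (hi : i < k), U i = u ⟨i, hi⟩ := fun i hi => by
    funext ω; simp [hUdef, hi]
  have hVeq : ∀ (i : ℕ) (hi : i < k), V i = v ⟨i, hi⟩ := fun i hi => by
    funext ω; simp [hVdef, hi]
  have hprodU : ∀ ω, (∏ i, u i ω) = ∏ i ∈ Finset.range k, U i ω := by
    intro ω
    rw [← Fin.prod_univ_eq_prod_range (fun n => U n ω) k]
    exact Finset.prod_congr rfl fun i _ => by rw [hUeq i.1 i.2]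
  have hprodV : ∀ ω, (∏ i, v i ω) = ∏ i ∈ Finset.range k, V i ω := by
    intro ω
    rw [← Fin.prod_univ_eq_prod_range (fun n => V n ω) k]
    exact Finset.prod_congr rfl fun i _ => by rw [hVeq i.1 i.2]
  -- the real factor functions
  set A : ℕ → ℕ → Ω → ℝ := fun j i ω =>
    if i < j then |V i ω| else if i = j then |U i ω - V i ω| else |U i ω| with hAdef
  have hAnn : ∀ j i ω, 0 ≤ A j i ω := by
    intro j i ω
    simp only [hAdef]
    split_ifs <;> positivity
  -- pointwise telescoping bound
  have htel : ∀ ω, |(∏ i, u i ω) - (∏ i, v i ω)|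
      ≤ ∑ j ∈ Finset.range k, ∏ i ∈ Finset.range k, A j i ω := by
    intro ω
    rw [hprodU, hprodV]
    refine (abs_prod_sub_prod_le (fun i => U i ω) (fun i => V i ω) k).trans (le_of_eq ?_)
    refine Finset.sum_congr rfl fun j hj => ?_
    have hjk : j + 1 ≤ k := Nat.succ_le_of_lt (mem_range.mp hj)
    rw [← Finset.prod_range_mul_prod_Ico (fun i => A j i ω) hjk, Finset.prod_range_succ]
    have e1 : ∏ i ∈ Finset.range j, A j i ω = ∏ i ∈ Finset.range j, |V i ω| :=
      Finset.prod_congr rfl fun i hi => by simp [hAdef, mem_range.mp hi]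
    have e2 : A j j ω = |U j ω - V j ω| := by simp [hAdef]
    have e3 : ∏ i ∈ Finset.Ico (j+1) k, A j i ω = ∏ i ∈ Finset.Ico (j+1) k, |U i ω| := by
      refine Finset.prod_congr rfl fun i hi => ?_
      have hji : j < i := Nat.lt_of_succ_le (Finset.mem_Ico.mp hi).1
      simp [hAdef, Nat.lt_asymm hji, (Nat.ne_of_gt hji)]
    rw [e1, e2, e3]
  -- measurability
  have hUm : ∀ n, Measurable (U n) := by
    intro n
    by_cases h : n < k
    · rw [hUeq n h]; exact hu _
    · have : U n = fun _ => 0 := by funext ω; simp [hUdef, h]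
      rw [this]; exact measurable_const
  have hVm : ∀ n, Measurable (V n) := by
    intro n
    by_cases h : n < k
    · rw [hVeq n h]; exact hv _
    · have : V n = fun _ => 0 := by funext ω; simp [hVdef, h]
      rw [this]; exact measurable_const
  have hAm : ∀ j i, Measurable (A j i) := by
    intro j i
    rcases lt_trichotomy i j with h | h | h
    · have : A j i = fun ω => |V i ω| := by funext ω; simp [hAdef, h]
      rw [this]; exact (hVm i).abs
    · have : A j i = fun ω => |U i ω - V i ω| := by
        funext ω; simp [hAdef, h]
      rw [this]; exact ((hUm i).sub (hVm i)).abs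
    · have : A j i = fun ω => |U i ω| := by
        funext ω; simp [hAdef, Nat.lt_asymm h, Nat.ne_of_gt h]
      rw [this]; exact (hUm i).abs
  -- ENNReal factor functions
  set F : ℕ → ℕ → Ω → ℝ≥0∞ := fun j i ω => ENNReal.ofReal (A j i ω) with hFdef
  have hFm : ∀ j i, Measurable (F j i) := fun j i => (hAm j i).ennreal_ofReal
  set Cb : ℝ≥0∞ := ENNReal.ofReal C with hCbdef
  set Db : ℝ≥0∞ := ENNReal.ofReal D with hDbdef
  -- pointwise ENNReal bound
  have hpt : ∀ ω, ENNReal.ofReal (|(∏ i, u i ω) - (∏ i, v i ω)| ^ p)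
      ≤ (k : ℝ≥0∞) ^ (p - 1) *
          ∑ j ∈ Finset.range k, ∏ i ∈ Finset.range k, (F j i ω) ^ p := by
    intro ω
    rw [← ENNReal.ofReal_rpow_of_nonneg (abs_nonneg _) hp0]
    calc (ENNReal.ofReal |(∏ i, u i ω) - (∏ i, v i ω)|) ^ p
        ≤ (ENNReal.ofReal (∑ j ∈ Finset.range k, ∏ i ∈ Finset.range k, A j i ω)) ^ p := by
          gcongr
          exact htel ω
      _ = (∑ j ∈ Finset.range k, ∏ i ∈ Finset.range k, F j i ω) ^ p := by
          rw [ENNReal.ofReal_sum_of_nonneg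
            (fun j _ => Finset.prod_nonneg fun i _ => hAnn j i ω)]
          congr 1
          exact Finset.sum_congr rfl fun j _ =>
            ENNReal.ofReal_prod_of_nonneg fun i _ => hAnn j i ω
      _ ≤ (k : ℝ≥0∞) ^ (p - 1)
            * ∑ j ∈ Finset.range k, (∏ i ∈ Finset.range k, F j i ω) ^ p :=
          ennreal_sum_rpow_le hk0 hp1 _
      _ = (k : ℝ≥0∞) ^ (p - 1)
            * ∑ j ∈ Finset.range k, ∏ i ∈ Finset.range k, (F j i ω) ^ p := by
          congr 1
          exact Finset.sum_congr rfl fun j _ => (ENNReal.prod_rpow_of_nonneg hp0).symm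
  -- per-factor lintegral bounds
  have hFint : ∀ j, ∀ i ∈ Finset.range k,
      ∫⁻ ω, (F j i ω) ^ (p * (k : ℝ)) ∂μ ≤ if i = j then Db else Cb := by
    intro j i hi
    have hik : i < k := mem_range.mp hi
    have e : ∀ ω, (F j i ω) ^ (p * (k : ℝ))
        = ENNReal.ofReal (A j i ω ^ (p * (k : ℝ))) := fun ω =>
      ENNReal.ofReal_rpow_of_nonneg (hAnn j i ω) hpk0
    simp only [e]
    rcases lt_trichotomy i j with h | h | h
    · have hA : A j i = fun ω => |v ⟨i, hik⟩ ω| := by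
        funext ω; simp [hAdef, h, hVeq i hik]
      rw [hA, if_neg (Nat.ne_of_lt h),
        ← ofReal_integral_eq_lintegral_ofReal (hvi ⟨i, hik⟩)
          (Filter.Eventually.of_forall fun ω => by positivity)]
      exact ENNReal.ofReal_le_ofReal (hC' ⟨i, hik⟩)
    · subst h
      have hA : A i i = fun ω => |u ⟨i, hik⟩ ω - v ⟨i, hik⟩ ω| := by
        funext ω; simp [hAdef, hUeq i hik, hVeq i hik]
      rw [hA, if_pos rfl,
        ← ofReal_integral_eq_lintegral_ofReal (huvi ⟨i, hik⟩)
          (Filter.Eventually.of_forall fun ω => by positivity)]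
      exact ENNReal.ofReal_le_ofReal (hD ⟨i, hik⟩)
    · have hA : A j i = fun ω => |u ⟨i, hik⟩ ω| := by
        funext ω; simp [hAdef, Nat.lt_asymm h, Nat.ne_of_gt h, hUeq i hik]
      rw [hA, if_neg (Nat.ne_of_gt h),
        ← ofReal_integral_eq_lintegral_ofReal (hui ⟨i, hik⟩)
          (Filter.Eventually.of_forall fun ω => by positivity)]
      exact ENNReal.ofReal_le_ofReal (hC ⟨i, hik⟩)
  -- Hölder per j
  have h1k0 : (0:ℝ) ≤ 1 / (k : ℝ) := by positivity
  have h1k1 : 1 / (k : ℝ) ≤ 1 := by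
    rw [div_le_one hK0]; exact_mod_cast hk
  have hHolder : ∀ j ∈ Finset.range k,
      ∫⁻ ω, ∏ i ∈ Finset.range k, (F j i ω) ^ p ∂μ
        ≤ Cb ^ (1 - 1 / (k : ℝ)) * Db ^ (1 / (k : ℝ)) := by
    intro j hj
    have hrw : ∀ ω, ∏ i ∈ Finset.range k, (F j i ω) ^ p
        = ∏ i ∈ Finset.range k, ((F j i ω) ^ (p * (k : ℝ))) ^ (1 / (k : ℝ)) := by
      intro ω
      refine Finset.prod_congr rfl fun i _ => ?_
      rw [← ENNReal.rpow_mul]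
      congr 1
      field_simp
    calc ∫⁻ ω, ∏ i ∈ Finset.range k, (F j i ω) ^ p ∂μ
        = ∫⁻ ω, ∏ i ∈ Finset.range k,
            ((F j i ω) ^ (p * (k : ℝ))) ^ (1 / (k : ℝ)) ∂μ := by
          exact lintegral_congr hrw
      _ ≤ ∏ i ∈ Finset.range k,
            (∫⁻ ω, (F j i ω) ^ (p * (k : ℝ)) ∂μ) ^ (1 / (k : ℝ)) := by
          refine ENNReal.lintegral_prod_norm_pow_le _
            (fun i _ => ((hFm j i).pow_const _).aemeasurable) ?_ (fun i _ => h1k0)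
          rw [Finset.sum_const, card_range, nsmul_eq_mul, mul_one_div,
            div_self (ne_of_gt hK0)]
      _ ≤ ∏ i ∈ Finset.range k, (if i = j then Db else Cb) ^ (1 / (k : ℝ)) := by
          gcongr with i hi
          exact hFint j i hi
      _ = Cb ^ (1 - 1 / (k : ℝ)) * Db ^ (1 / (k : ℝ)) := by
          rw [← Finset.mul_prod_erase _ _ hj, if_pos rfl]
          have he : ∏ i ∈ (Finset.range k).erase j, (if i = j then Db else Cb) ^ (1 / (k : ℝ))
              = (Cb ^ (1 / (k : ℝ))) ^ (k - 1 : ℕ) := by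
            rw [Finset.prod_congr rfl
              (fun i hi => by rw [if_neg (Finset.mem_erase.mp hi).1]),
              Finset.prod_const, card_erase_of_mem hj, card_range]
          rw [he, ← ENNReal.rpow_natCast, ← ENNReal.rpow_mul]
          have : 1 / (k : ℝ) * ((k - 1 : ℕ) : ℝ) = 1 - 1 / (k : ℝ) := by
            rw [Nat.cast_sub hk]
            push_cast
            field_simp
          rw [this, mul_comm]
  -- combine
  have hlint : ∫⁻ ω, ENNReal.ofReal (|(∏ i, u i ω) - (∏ i, v i ω)| ^ p) ∂μ
      ≤ (k : ℝ≥0∞) ^ p * Cb ^ (1 - 1 / (k : ℝ)) * Db ^ (1 / (k : ℝ)) := by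
    have hk0' : (k : ℝ≥0∞) ≠ 0 := Nat.cast_ne_zero.mpr hk0
    have hkt : (k : ℝ≥0∞) ≠ ⊤ := natCast_ne_top k
    calc ∫⁻ ω, ENNReal.ofReal (|(∏ i, u i ω) - (∏ i, v i ω)| ^ p) ∂μ
        ≤ ∫⁻ ω, (k : ℝ≥0∞) ^ (p - 1) *
            ∑ j ∈ Finset.range k, ∏ i ∈ Finset.range k, (F j i ω) ^ p ∂μ :=
          lintegral_mono hpt
      _ = (k : ℝ≥0∞) ^ (p - 1) * ∑ j ∈ Finset.range k,
            ∫⁻ ω, ∏ i ∈ Finset.range k, (F j i ω) ^ p ∂μ := by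
          rw [lintegral_const_mul' _ _
            (ENNReal.rpow_ne_top_of_nonneg (by linarith) hkt),
            lintegral_finset_sum' _ (fun j _ =>
              (Finset.measurable_prod _ fun i _ => (hFm j i).pow_const _).aemeasurable)]
      _ ≤ (k : ℝ≥0∞) ^ (p - 1) * ∑ _j ∈ Finset.range k,
            Cb ^ (1 - 1 / (k : ℝ)) * Db ^ (1 / (k : ℝ)) := by
          gcongr with j hj
          exact hHolder j hj
      _ = (k : ℝ≥0∞) ^ p * Cb ^ (1 - 1 / (k : ℝ)) * Db ^ (1 / (k : ℝ)) := by
          rw [Finset.sum_const, card_range, nsmul_eq_mul, ← mul_assoc, ← mul_assoc]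
          congr 2
          rw [show p = (p - 1) + 1 by ring, ENNReal.rpow_add _ _ hk0' hkt,
            ENNReal.rpow_one]
          ring_nf
  -- back to real integrals
  have hCnn : 0 ≤ C :=
    le_trans (integral_nonneg fun ω => by positivity) (hC ⟨0, hk⟩)
  have hDnn : 0 ≤ D :=
    le_trans (integral_nonneg fun ω => by positivity) (hD ⟨0, hk⟩)
  have hmeasdiff : Measurable fun ω => |(∏ i, u i ω) - (∏ i, v i ω)| ^ p :=
    (((Finset.measurable_prod _ fun i _ => hu i).sub
      (Finset.measurable_prod _ fun i _ => hv i)).abs).pow_const p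
  rw [integral_eq_lintegral_of_nonneg_ae
    (Filter.Eventually.of_forall fun ω => by positivity)
    hmeasdiff.aestronglyMeasurable]
  have hfin : (k : ℝ≥0∞) ^ p * Cb ^ (1 - 1 / (k : ℝ)) * Db ^ (1 / (k : ℝ)) ≠ ⊤ :=
    ENNReal.mul_ne_top
      (ENNReal.mul_ne_top (ENNReal.rpow_ne_top_of_nonneg hp0 (natCast_ne_top k))
        (ENNReal.rpow_ne_top_of_nonneg (by linarith) ENNReal.ofReal_ne_top))
      (ENNReal.rpow_ne_top_of_nonneg h1k0 ENNReal.ofReal_ne_top)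
  refine (ENNReal.toReal_mono hfin hlint).trans (le_of_eq ?_)
  rw [ENNReal.toReal_mul, ENNReal.toReal_mul, ← ENNReal.toReal_rpow,
    ← ENNReal.toReal_rpow, ← ENNReal.toReal_rpow, ENNReal.toReal_natCast,
    hCbdef, hDbdef, ENNReal.toReal_ofReal hCnn, ENNReal.toReal_ofReal hDnn]
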